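/- arXiv:2004.07190 — 12 statements merged into one kernel-verified Lean document; each statement's English description precedes it below -/
import Mathlib

section
/- Let D : [0,∞) → [0,∞) be a continuous non-decreasing function (supply curve) and I₁ > 0 a required number of impressions. If there exists b* ≥ 0 with D(b*) = I₁, then the minimum cost of obtaining I₁ impressions, where bidding with value b yields D(b) impressions at cost D(b)·b − ∫₀ᵇ D(u) du, equals I₁·b* − ∫₀^{b*} D(u) du, achieved by bidding b* for all requests. -/
/-!
Bidding `b` costs `D b * b - ∫₀ᵇ D`. Since `D` is monotone, `∫_{b*}^b D ≤ (b - b*) D b` in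
either orientation, so every bid costs at least `D b * b* - ∫₀^{b*} D`: as a function of the
impressions `D b` obtained, the cost lies above a line of slope `b* ≥ 0`. Averaging this bound
with the weights `γ` and using `∑ γ D ≥ I₁`, `∑ γ ≤ 1` and `∫₀^{b*} D ≥ 0` bounds the cost of
every feasible strategy below by the cost of the pure bid `b*`.
-/

theorem Monotone.intervalIntegral_le_sub_mul {f : ℝ → ℝ} (hf : Monotone f) (a b : ℝ) :
    ∫ u in a..b, f u ≤ (b - a) * f b := by
  rcases le_total a b with hab | hba
  · calc ∫ u in a..b, f u ≤ ∫ _ in a..b, f b :=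
          intervalIntegral.integral_mono_on hab hf.intervalIntegrable intervalIntegrable_const
            fun u hu => hf hu.2
      _ = (b - a) * f b := by simp
  · have : (a - b) * f b ≤ ∫ u in b..a, f u :=
      calc (a - b) * f b = ∫ _ in b..a, f b := by simp
        _ ≤ ∫ u in b..a, f u :=
          intervalIntegral.integral_mono_on hba intervalIntegrable_const hf.intervalIntegrable
            fun u hu => hf hu.1
    rw [intervalIntegral.integral_symm]
    linarith

theorem Monotone.mul_sub_intervalIntegral_le {D : ℝ → ℝ} (hD : Monotone D) (b₀ b : ℝ) :
    D b * b₀ - ∫ u in (0:ℝ)..b₀, D u ≤ D b * b - ∫ u in (0:ℝ)..b, D u := by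
  have hsplit : ∫ u in (0:ℝ)..b, D u = (∫ u in (0:ℝ)..b₀, D u) + ∫ u in b₀..b, D u :=
    (intervalIntegral.integral_add_adjacent_intervals hD.intervalIntegrable
      hD.intervalIntegrable).symm
  have := hD.intervalIntegral_le_sub_mul b₀ b
  rw [hsplit]
  linarith

theorem stmt0_general (D : ℝ → ℝ) (hmono : Monotone D)
    (hnn : ∀ b, 0 ≤ D b) (I₁ : ℝ)
    (bstar : ℝ) (hbstar : 0 ≤ bstar) (hDb : D bstar = I₁) :
    IsLeast {c : ℝ | ∃ (P : Finset ℝ) (γ : ℝ → ℝ),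
        (∀ b ∈ P, 0 ≤ b) ∧ (∀ b ∈ P, 0 ≤ γ b) ∧
        (∑ b ∈ P, γ b) ≤ 1 ∧
        I₁ ≤ ∑ b ∈ P, γ b * D b ∧
        c = ∑ b ∈ P, γ b * (D b * b - ∫ u in (0:ℝ)..b, D u)}
      (I₁ * bstar - ∫ u in (0:ℝ)..bstar, D u) := by
  set K := ∫ u in (0:ℝ)..bstar, D u
  have hK : 0 ≤ K := intervalIntegral.integral_nonneg hbstar fun u _ => hnn u
  refine ⟨⟨{bstar}, fun _ => 1, by simpa, by simp, by simp, by simp [hDb], by simp [hDb, K]⟩, ?_⟩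
  rintro c ⟨P, γ, -, hγ, hγsum, hfeas, rfl⟩
  calc I₁ * bstar - K ≤ (∑ b ∈ P, γ b * D b) * bstar - (∑ b ∈ P, γ b) * K := by
        gcongr
        exact mul_le_of_le_one_left hK hγsum
    _ = ∑ b ∈ P, γ b * (D b * bstar - K) := by
        simp only [Finset.sum_mul, ← Finset.sum_sub_distrib]
        exact Finset.sum_congr rfl fun b _ => by ring
    _ ≤ ∑ b ∈ P, γ b * (D b * b - ∫ u in (0:ℝ)..b, D u) :=
        Finset.sum_le_sum fun b hb =>
          mul_le_mul_of_nonneg_left (hmono.mul_sub_intervalIntegral_le bstar b) (hγ b hb)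

/-- For a continuous non-decreasing nonnegative supply curve `D` and
required impressions `I₁ > 0`, if `D b* = I₁` for some `b* ≥ 0`, then the minimal cost
over all feasible mixed bidding strategies equals `I₁·b* − ∫₀^{b*} D`, achieved by the
pure strategy bidding `b*`. -/
theorem stmt0 (D : ℝ → ℝ) (hmono : Monotone D) (hcont : Continuous D)
    (hnn : ∀ b, 0 ≤ D b) (I₁ : ℝ) (hI : 0 < I₁)
    (bstar : ℝ) (hbstar : 0 ≤ bstar) (hDb : D bstar = I₁) :
    IsLeast {c : ℝ | ∃ (P : Finset ℝ) (γ : ℝ → ℝ),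
        (∀ b ∈ P, 0 ≤ b) ∧ (∀ b ∈ P, 0 ≤ γ b) ∧
        (∑ b ∈ P, γ b) ≤ 1 ∧
        I₁ ≤ ∑ b ∈ P, γ b * D b ∧
        c = ∑ b ∈ P, γ b * (D b * b - ∫ u in (0:ℝ)..b, D u)}
      (I₁ * bstar - ∫ u in (0:ℝ)..bstar, D u) :=
  stmt0_general D hmono hnn I₁ bstar hbstar hDb
end

section
/- Let D : [0,∞) → [0,∞) be a non-decreasing right-continuous function, I₁ > 0, and let b* satisfy D(b*) ≥ I₁ and D(b) < I₁ for all 0 ≤ b < b*. Then any feasible mixed bidding strategy s satisfying Σ_{b∈P} γ(b)·D(b) ≥ I₁ and Σ_{b∈P} γ(b) ≤ 1 has cost C(s) ≥ I₁·b* − ∫₀^{b*} D(u) du. -/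
open MeasureTheory Topology

/-- For a non-decreasing right-continuous supply curve `D`, target `I₁ > 0`,
and critical bid `b*` (with `D b* ≥ I₁` and `D b < I₁` for `0 ≤ b < b*`), every feasible
mixed bidding strategy has cost at least `I₁·b* − ∫₀^{b*} D`. -/
theorem stmt1 (D : ℝ → ℝ) (hmono : Monotone D)
    (hrc : ∀ a : ℝ, ContinuousWithinAt D (Set.Ici a) a)
    (hnn : ∀ b, 0 ≤ D b) (I₁ : ℝ) (hI : 0 < I₁)
    (bstar : ℝ) (hbstar : 0 ≤ bstar) (hDbstar : I₁ ≤ D bstar)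
    (hcrit : ∀ b, 0 ≤ b → b < bstar → D b < I₁)
    (P : Finset ℝ) (γ : ℝ → ℝ)
    (hPnn : ∀ b ∈ P, 0 ≤ b) (hγnn : ∀ b ∈ P, 0 ≤ γ b)
    (hγsum : (∑ b ∈ P, γ b) ≤ 1)
    (hfeas : I₁ ≤ ∑ b ∈ P, γ b * D b) :
    I₁ * bstar - (∫ u in (0:ℝ)..bstar, D u) ≤
      ∑ b ∈ P, γ b * (D b * b - ∫ u in (0:ℝ)..b, D u) := by
  have hint : ∀ a b : ℝ, IntervalIntegrable D volume a b :=
    fun a b => hmono.intervalIntegrable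
  set K := ∫ u in (0:ℝ)..bstar, D u with hK
  have hKnn : 0 ≤ K := intervalIntegral.integral_nonneg hbstar (fun u _ => hnn u)
  have key : ∀ b : ℝ, D b * bstar - K ≤ D b * b - ∫ u in (0:ℝ)..b, D u := by
    intro b
    have hsplit : (∫ u in (0:ℝ)..b, D u) + (∫ u in b..bstar, D u) = K :=
      intervalIntegral.integral_add_adjacent_intervals (hint 0 b) (hint b bstar)
    have hlb : D b * (bstar - b) ≤ ∫ u in b..bstar, D u := by
      rcases le_total b bstar with h | h
      · have := intervalIntegral.integral_mono_on h intervalIntegrable_const (hint b bstar)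
          (fun u hu => hmono hu.1)
        simpa [mul_comm] using this
      · have := intervalIntegral.integral_mono_on h (hint bstar b) intervalIntegrable_const
          (fun u hu => hmono hu.2)
        rw [intervalIntegral.integral_symm]
        simp only [intervalIntegral.integral_const, smul_eq_mul] at this ⊢
        nlinarith
    nlinarith
  have step1 : ∑ b ∈ P, γ b * (D b * bstar - K) ≤
      ∑ b ∈ P, γ b * (D b * b - ∫ u in (0:ℝ)..b, D u) :=
    Finset.sum_le_sum fun b hb =>
      mul_le_mul_of_nonneg_left (key b) (hγnn b hb)
  have expand : ∑ b ∈ P, γ b * (D b * bstar - K)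
      = bstar * (∑ b ∈ P, γ b * D b) - K * (∑ b ∈ P, γ b) := by
    rw [Finset.mul_sum, Finset.mul_sum, ← Finset.sum_sub_distrib]
    exact Finset.sum_congr rfl fun b _ => by ring
  have h1 : I₁ * bstar ≤ bstar * (∑ b ∈ P, γ b * D b) := by
    nlinarith
  have h2 : K * (∑ b ∈ P, γ b) ≤ K := by
    nlinarith
  linarith [step1, expand.ge, expand.le]
end

section
/- Let D : [0,∞) → [0,∞) be non-decreasing and right-continuous, I₁ > 0, and b* defined by D(b*) ≥ I₁ and D(b) < I₁ for 0 ≤ b < b*. Suppose the left limit D⁻(b*) := lim_{b↑b*} D(b) > 0 and D(b*) > I₁. For b₁ < b* define the two-point mixed strategy s(b₁) with weights γ(b₁) = (D(b*) − I₁)/(D(b*) − D(b₁)) on bid b₁ and γ(b*) = 1 − γ(b₁) on bid b*. Then s(b₁) obtains exactly I₁ impressions and lim_{b₁ ↑ b*} C(s(b₁)) = I₁·b* − ∫₀^{b*} D(u) du. -/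
/-!
Splitting `∫₀^{b*} D` at `b₁`, the excess of the cost of `s(b₁)` over `I₁·b* − ∫₀^{b*} D` is
`γ(b₁)·(∫_{b₁}^{b*} D − D(b₁)(b* − b₁))`, plus `b*` times the impression defect, which vanishes.
By monotonicity of `D` the bracket lies between `0` and `(D(b*) − D(b₁))(b* − b₁)`, and
`γ(b₁)(D(b*) − D(b₁)) = D(b*) − I₁`, so the excess is squeezed between `0` and
`(D(b*) − I₁)(b* − b₁) → 0`.
-/

open MeasureTheory Topology Filter Set

noncomputable section

/-- The weight on the lower bid of a two-point mixture whose bids yield `x ≤ y` impressions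
and which targets `I` impressions. -/
def mixedWeight (x y I : ℝ) : ℝ := (y - I) / (y - x)

def bidCost (D : ℝ → ℝ) (b : ℝ) : ℝ := D b * b - ∫ u in (0 : ℝ)..b, D u

def mixedCost (D : ℝ → ℝ) (I b₁ b : ℝ) : ℝ :=
  mixedWeight (D b₁) (D b) I * bidCost D b₁ + (1 - mixedWeight (D b₁) (D b) I) * bidCost D b

end

section mixedWeight

variable {x y I : ℝ}

theorem mixedWeight_mul_add_one_sub_mul (hxy : x ≠ y) :
    mixedWeight x y I * x + (1 - mixedWeight x y I) * y = I := by
  have : y - x ≠ 0 := sub_ne_zero.mpr hxy.symm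
  unfold mixedWeight
  field_simp
  ring

theorem mixedWeight_nonneg (hxy : x ≤ y) (hI : I ≤ y) : 0 ≤ mixedWeight x y I :=
  div_nonneg (sub_nonneg.mpr hI) (sub_nonneg.mpr hxy)

theorem mixedWeight_mul_sub_le (hI : I ≤ y) : mixedWeight x y I * (y - x) ≤ y - I := by
  rcases eq_or_ne (y - x) 0 with h | h
  · simpa [h] using hI
  · exact (div_mul_cancel₀ _ h).le

end mixedWeight

theorem Monotone.mul_sub_le_intervalIntegral {f : ℝ → ℝ} (hf : Monotone f) {a b : ℝ}
    (hab : a ≤ b) : f a * (b - a) ≤ ∫ u in a..b, f u := by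
  simpa [mul_comm] using intervalIntegral.integral_mono_on hab (intervalIntegrable_const (μ := volume))
    hf.intervalIntegrable fun _ hu => hf hu.1

theorem Monotone.intervalIntegral_le_mul_sub {f : ℝ → ℝ} (hf : Monotone f) {a b : ℝ}
    (hab : a ≤ b) : ∫ u in a..b, f u ≤ f b * (b - a) := by
  simpa [mul_comm] using intervalIntegral.integral_mono_on hab hf.intervalIntegrable
    (intervalIntegrable_const (μ := volume)) fun _ hu => hf hu.2

theorem mixedCost_sub_eq {D : ℝ → ℝ} {I b₁ b : ℝ} (h₀ : IntervalIntegrable D volume 0 b₁)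
    (h₁ : IntervalIntegrable D volume b₁ b) :
    mixedCost D I b₁ b - (I * b - ∫ u in (0 : ℝ)..b, D u) =
      mixedWeight (D b₁) (D b) I * ((∫ u in b₁..b, D u) - D b₁ * (b - b₁)) +
        b * (mixedWeight (D b₁) (D b) I * D b₁ + (1 - mixedWeight (D b₁) (D b) I) * D b - I) := by
  rw [mixedCost, bidCost, bidCost, ← intervalIntegral.integral_add_adjacent_intervals h₀ h₁]
  ring

section Monotone

variable {D : ℝ → ℝ} {I b₁ b : ℝ}

theorem mixedCost_sub_mem_Icc (hD : Monotone D) (hI : I ≤ D b) (hb₁ : b₁ ≤ b)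
    (hdeg : b = 0 ∨ D b₁ ≠ D b) :
    mixedCost D I b₁ b - (I * b - ∫ u in (0 : ℝ)..b, D u) ∈ Icc 0 ((D b - I) * (b - b₁)) := by
  have hdefect : b * (mixedWeight (D b₁) (D b) I * D b₁ +
      (1 - mixedWeight (D b₁) (D b) I) * D b - I) = 0 := by
    rcases hdeg with h | h
    · rw [h, zero_mul]
    · rw [mixedWeight_mul_add_one_sub_mul h, sub_self, mul_zero]
  rw [mixedCost_sub_eq hD.intervalIntegrable hD.intervalIntegrable, hdefect, add_zero]
  have hw := mixedWeight_nonneg (hD hb₁) hI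
  have hlow := hD.mul_sub_le_intervalIntegral hb₁
  have hhigh := hD.intervalIntegral_le_mul_sub hb₁
  refine ⟨mul_nonneg hw (sub_nonneg.mpr hlow), ?_⟩
  calc mixedWeight (D b₁) (D b) I * ((∫ u in b₁..b, D u) - D b₁ * (b - b₁))
      ≤ mixedWeight (D b₁) (D b) I * ((D b - D b₁) * (b - b₁)) :=
        mul_le_mul_of_nonneg_left (by linarith) hw
    _ = mixedWeight (D b₁) (D b) I * (D b - D b₁) * (b - b₁) := by ring
    _ ≤ (D b - I) * (b - b₁) :=
        mul_le_mul_of_nonneg_right (mixedWeight_mul_sub_le hI) (sub_nonneg.mpr hb₁)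

theorem tendsto_mixedCost_nhdsLT (hD : Monotone D) (hI : I ≤ D b)
    (hdeg : ∀ᶠ b₁ in 𝓝[<] b, b = 0 ∨ D b₁ ≠ D b) :
    Tendsto (fun b₁ => mixedCost D I b₁ b) (𝓝[<] b) (𝓝 (I * b - ∫ u in (0 : ℝ)..b, D u)) := by
  set T := I * b - ∫ u in (0 : ℝ)..b, D u
  have hbounds : ∀ᶠ b₁ in 𝓝[<] b, mixedCost D I b₁ b - T ∈ Icc 0 ((D b - I) * (b - b₁)) := by
    filter_upwards [hdeg, self_mem_nhdsWithin] with b₁ h hb₁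
    exact mixedCost_sub_mem_Icc hD hI (le_of_lt hb₁) h
  have hupper : Tendsto (fun b₁ => (D b - I) * (b - b₁)) (𝓝[<] b) (𝓝 0) := by
    have : Continuous fun b₁ : ℝ => (D b - I) * (b - b₁) := by fun_prop
    simpa using (this.tendsto b).mono_left nhdsWithin_le_nhds
  have hexcess : Tendsto (fun b₁ => mixedCost D I b₁ b - T) (𝓝[<] b) (𝓝 0) :=
    tendsto_of_tendsto_of_tendsto_of_le_of_le' tendsto_const_nhds hupper
      (hbounds.mono fun _ h => h.1) (hbounds.mono fun _ h => h.2)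
  simpa using hexcess.add_const T

end Monotone

theorem stmt2_general (D : ℝ → ℝ) (hmono : Monotone D)
    (I₁ : ℝ)
    (bstar : ℝ) (hbstar : 0 ≤ bstar) (hDbstar : I₁ ≤ D bstar)
    (hcrit : ∀ b, 0 ≤ b → b < bstar → D b < I₁) :
    (∀ b₁, 0 ≤ b₁ → b₁ < bstar →
      ((D bstar - I₁) / (D bstar - D b₁)) * D b₁ +
        (1 - (D bstar - I₁) / (D bstar - D b₁)) * D bstar = I₁) ∧
    Filter.Tendsto
      (fun b₁ : ℝ =>
        ((D bstar - I₁) / (D bstar - D b₁)) * (D b₁ * b₁ - ∫ u in (0:ℝ)..b₁, D u) +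
          (1 - (D bstar - I₁) / (D bstar - D b₁)) *
            (D bstar * bstar - ∫ u in (0:ℝ)..bstar, D u))
      (𝓝[<] bstar)
      (𝓝 (I₁ * bstar - ∫ u in (0:ℝ)..bstar, D u)) := by
  have hlt : ∀ b₁, 0 ≤ b₁ → b₁ < bstar → D b₁ < D bstar := fun b₁ h₀ h₁ =>
    (hcrit b₁ h₀ h₁).trans_le hDbstar
  refine ⟨fun b₁ h₀ h₁ => mixedWeight_mul_add_one_sub_mul (hlt b₁ h₀ h₁).ne,
    tendsto_mixedCost_nhdsLT hmono hDbstar ?_⟩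
  rcases hbstar.eq_or_lt with h | h
  · exact Eventually.of_forall fun _ => Or.inl h.symm
  · filter_upwards [Ioo_mem_nhdsLT h] with b₁ hb₁
    exact Or.inr (hlt b₁ hb₁.1.le hb₁.2).ne

/-- With critical bid `b*` for target `I₁` (`D b* ≥ I₁`, `D b < I₁` below),
left limit `D⁻(b*) > 0` and `D b* > I₁`, the two-point mixed strategy with weight
`γ(b₁) = (D b* − I₁)/(D b* − D b₁)` on `b₁` and `1 − γ(b₁)` on `b*` obtains exactly `I₁`
impressions, and its cost tends to `I₁·b* − ∫₀^{b*} D` as `b₁ ↑ b*`. -/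
theorem stmt2 (D : ℝ → ℝ) (hmono : Monotone D)
    (hrc : ∀ a : ℝ, ContinuousWithinAt D (Set.Ici a) a)
    (hnn : ∀ b, 0 ≤ D b) (I₁ : ℝ) (hI : 0 < I₁)
    (bstar : ℝ) (hbstar : 0 ≤ bstar) (hDbstar : I₁ ≤ D bstar)
    (hcrit : ∀ b, 0 ≤ b → b < bstar → D b < I₁)
    (Dminus : ℝ) (hDminus : Filter.Tendsto D (𝓝[<] bstar) (𝓝 Dminus))
    (hDminus_pos : 0 < Dminus) (hgt : I₁ < D bstar) :
    (∀ b₁, 0 ≤ b₁ → b₁ < bstar →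
      ((D bstar - I₁) / (D bstar - D b₁)) * D b₁ +
        (1 - (D bstar - I₁) / (D bstar - D b₁)) * D bstar = I₁) ∧
    Filter.Tendsto
      (fun b₁ : ℝ =>
        ((D bstar - I₁) / (D bstar - D b₁)) * (D b₁ * b₁ - ∫ u in (0:ℝ)..b₁, D u) +
          (1 - (D bstar - I₁) / (D bstar - D b₁)) *
            (D bstar * bstar - ∫ u in (0:ℝ)..bstar, D u))
      (𝓝[<] bstar)
      (𝓝 (I₁ * bstar - ∫ u in (0:ℝ)..bstar, D u)) :=
  stmt2_general D hmono I₁ bstar hbstar hDbstar hcrit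
end

section
/- Let D₁, D₂ : [0,∞) → [0,∞) be non-decreasing right-continuous supply curves, and let I₁, I₂ ≥ 0 be impression quantities obtained from groups 1, 2 respectively, with total I_t = I₁ + I₂ > 0. Let b₁, b₂ be the minimal bids with D₁(b₁) ≥ I₁, D₂(b₂) ≥ I₂ (and D_j(b) < I_j for b < b_j), and let b_t be minimal with D₁(b_t) + D₂(b_t) ≥ I_t (and D₁(b)+D₂(b) < I_t for b < b_t). Then I₁·b₁ − ∫₀^{b₁} D₁(u) du + I₂·b₂ − ∫₀^{b₂} D₂(u) du ≥ I_t·b_t − ∫₀^{b_t} (D₁(u)+D₂(u)) du. -/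
open MeasureTheory Topology

lemma stmt5_aux (D : ℝ → ℝ) (hmono : Monotone D) (I b c : ℝ)
    (hb : 0 ≤ b) (hc : 0 ≤ c) (hDb : I ≤ D b)
    (hcrit : ∀ x, 0 ≤ x → x < b → D x < I) :
    ∫ u in (0:ℝ)..c, (I - D u) ≤ ∫ u in (0:ℝ)..b, (I - D u) := by
  have hanti : Antitone fun u : ℝ => I - D u := fun x y hxy => by
    simp only [sub_le_sub_iff_left]; exact hmono hxy
  have hint : ∀ x y : ℝ, IntervalIntegrable (fun u => I - D u) volume x y :=
    fun x y => hanti.intervalIntegrable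
  rcases le_total c b with h | h
  · have hsplit := intervalIntegral.integral_add_adjacent_intervals (hint 0 c) (hint c b)
    rw [← hsplit]
    have hnn : 0 ≤ ∫ u in c..b, (I - D u) := by
      apply intervalIntegral.integral_nonneg_of_ae_restrict h
      have hne : ∀ᵐ u : ℝ ∂(volume.restrict (Set.Icc c b)), u ≠ b := by
        refine MeasureTheory.ae_restrict_of_ae ?_
        refine MeasureTheory.ae_iff.mpr ?_
        simp
      filter_upwards [hne, MeasureTheory.ae_restrict_mem measurableSet_Icc] with u hub hu
      have hub' : u < b := lt_of_le_of_ne hu.2 hub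
      have : D u < I := hcrit u (hc.trans hu.1) hub'
      simp only [Pi.zero_apply]
      linarith
    linarith
  · have hsplit := intervalIntegral.integral_add_adjacent_intervals (hint 0 b) (hint b c)
    rw [← hsplit]
    have hnp : ∫ u in b..c, (I - D u) ≤ 0 := by
      have : 0 ≤ ∫ u in b..c, (D u - I) := by
        apply intervalIntegral.integral_nonneg h
        intro u hu
        have : I ≤ D u := hDb.trans (hmono hu.1)
        linarith
      have heq : ∫ u in b..c, (I - D u) = -∫ u in b..c, (D u - I) := by
        rw [← intervalIntegral.integral_neg]
        congr 1 with u; ring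
      rw [heq]; linarith
    linarith

/-- Superadditivity of the lower-bound cost across two targeting groups:
with critical bids `b₁, b₂` for the individual targets and `b_t` for the aggregate,
`I₁·b₁ − ∫₀^{b₁} D₁ + I₂·b₂ − ∫₀^{b₂} D₂ ≥ I_t·b_t − ∫₀^{b_t} (D₁+D₂)`. -/
theorem stmt5 (D₁ D₂ : ℝ → ℝ)
    (hmono₁ : Monotone D₁) (hmono₂ : Monotone D₂)
    (hrc₁ : ∀ a : ℝ, ContinuousWithinAt D₁ (Set.Ici a) a)
    (hrc₂ : ∀ a : ℝ, ContinuousWithinAt D₂ (Set.Ici a) a)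
    (hnn₁ : ∀ b, 0 ≤ D₁ b) (hnn₂ : ∀ b, 0 ≤ D₂ b)
    (I₁ I₂ : ℝ) (hI₁ : 0 ≤ I₁) (hI₂ : 0 ≤ I₂) (hIt : 0 < I₁ + I₂)
    (b₁ b₂ bt : ℝ) (hb₁nn : 0 ≤ b₁) (hb₂nn : 0 ≤ b₂) (hbtnn : 0 ≤ bt)
    (hD₁b₁ : I₁ ≤ D₁ b₁) (hcrit₁ : ∀ b, 0 ≤ b → b < b₁ → D₁ b < I₁)
    (hD₂b₂ : I₂ ≤ D₂ b₂) (hcrit₂ : ∀ b, 0 ≤ b → b < b₂ → D₂ b < I₂)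
    (hDtbt : I₁ + I₂ ≤ D₁ bt + D₂ bt)
    (hcritt : ∀ b, 0 ≤ b → b < bt → D₁ b + D₂ b < I₁ + I₂) :
    (I₁ + I₂) * bt - (∫ u in (0:ℝ)..bt, (D₁ u + D₂ u)) ≤
      (I₁ * b₁ - ∫ u in (0:ℝ)..b₁, D₁ u) + (I₂ * b₂ - ∫ u in (0:ℝ)..b₂, D₂ u) := by
  have hint₁ : ∀ x y : ℝ, IntervalIntegrable D₁ volume x y :=
    fun x y => hmono₁.intervalIntegrable
  have hint₂ : ∀ x y : ℝ, IntervalIntegrable D₂ volume x y :=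
    fun x y => hmono₂.intervalIntegrable
  -- rewrite each cost as an integral of (I - D)
  have key : ∀ (D : ℝ → ℝ) (I b : ℝ), IntervalIntegrable D volume 0 b →
      I * b - (∫ u in (0:ℝ)..b, D u) = ∫ u in (0:ℝ)..b, (I - D u) := by
    intro D I b hD
    rw [intervalIntegral.integral_sub intervalIntegrable_const hD,
      intervalIntegral.integral_const, smul_eq_mul]
    ring
  have h1 := stmt5_aux D₁ hmono₁ I₁ b₁ bt hb₁nn hbtnn hD₁b₁ hcrit₁
  have h2 := stmt5_aux D₂ hmono₂ I₂ b₂ bt hb₂nn hbtnn hD₂b₂ hcrit₂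
  have hsum : ∫ u in (0:ℝ)..bt, (D₁ u + D₂ u) =
      (∫ u in (0:ℝ)..bt, D₁ u) + ∫ u in (0:ℝ)..bt, D₂ u :=
    intervalIntegral.integral_add (hint₁ 0 bt) (hint₂ 0 bt)
  rw [hsum, key D₁ I₁ b₁ (hint₁ 0 b₁), key D₂ I₂ b₂ (hint₂ 0 b₂)]
  have e1 := key D₁ I₁ bt (hint₁ 0 bt)
  have e2 := key D₂ I₂ bt (hint₂ 0 bt)
  nlinarith [h1, h2, e1, e2]
end

section
/- Let D₁,…,D_k : [0,∞) → [0,∞) be non-decreasing right-continuous supply curves and I_t > 0. Let D_t(b) = Σ_{j=1}^k D_j(b) and let b_t satisfy D_t(b_t) ≥ I_t and D_t(b) < I_t for 0 ≤ b < b_t. Then any mixed bidding strategy that obtains a total of I_t impressions across the k targeting groups has cost at least I_t·b_t − ∫₀^{b_t} D_t(u) du. -/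
open MeasureTheory Topology

/-- For `k` targeting groups with aggregate supply `D_t = Σ_j D_j` and
critical bid `b_t` for target `I_t`, any mixed bidding strategy obtaining at least `I_t`
impressions in total costs at least `I_t·b_t − ∫₀^{b_t} D_t`. -/
theorem stmt6 (k : ℕ) (D : Fin k → ℝ → ℝ)
    (hmono : ∀ j, Monotone (D j))
    (hrc : ∀ j, ∀ a : ℝ, ContinuousWithinAt (D j) (Set.Ici a) a)
    (hnn : ∀ j b, 0 ≤ D j b)
    (It : ℝ) (hIt : 0 < It)
    (bt : ℝ) (hbtnn : 0 ≤ bt)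
    (hDtbt : It ≤ ∑ j, D j bt)
    (hcrit : ∀ b, 0 ≤ b → b < bt → (∑ j, D j b) < It)
    (P : Fin k → Finset ℝ) (γ : Fin k → ℝ → ℝ)
    (hPnn : ∀ j, ∀ b ∈ P j, 0 ≤ b)
    (hγnn : ∀ j, ∀ b ∈ P j, 0 ≤ γ j b)
    (hγsum : ∀ j, (∑ b ∈ P j, γ j b) ≤ 1)
    (hfeas : It ≤ ∑ j, ∑ b ∈ P j, γ j b * D j b) :
    It * bt - (∫ u in (0:ℝ)..bt, (∑ j, D j u)) ≤
      ∑ j, ∑ b ∈ P j, γ j b * (D j b * b - ∫ u in (0:ℝ)..b, D j u) := by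
  have hint : ∀ j (a b : ℝ), IntervalIntegrable (D j) volume a b := fun j a b =>
    (hmono j).intervalIntegrable
  set C : Fin k → ℝ := fun j => ∫ u in (0:ℝ)..bt, D j u with hC
  have hCnn : ∀ j, 0 ≤ C j := fun j =>
    intervalIntegral.integral_nonneg hbtnn (fun u _ => hnn j u)
  have hsum : (∫ u in (0:ℝ)..bt, (∑ j, D j u)) = ∑ j, C j := by
    rw [intervalIntegral.integral_finset_sum]
    intro j _; exact hint j 0 bt
  -- key pointwise bound
  have key : ∀ j, ∀ b ∈ P j, bt * D j b - C j ≤ D j b * b - ∫ u in (0:ℝ)..b, D j u := by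
    intro j b hb
    have hsplit : (∫ u in (0:ℝ)..b, D j u) = C j + ∫ u in bt..b, D j u := by
      rw [hC, intervalIntegral.integral_add_adjacent_intervals (hint j 0 bt) (hint j bt b)]
    rw [hsplit]
    have hle : (∫ u in bt..b, D j u) ≤ D j b * (b - bt) := by
      rcases le_total bt b with h | h
      · calc (∫ u in bt..b, D j u) ≤ ∫ _ in bt..b, D j b := by
              apply intervalIntegral.integral_mono_on h (hint j bt b)
                intervalIntegrable_const
              intro u hu; exact hmono j hu.2
          _ = D j b * (b - bt) := by simp [mul_comm]
      · have h1 : (∫ u in bt..b, D j u) = - ∫ u in b..bt, D j u :=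
          intervalIntegral.integral_symm _ _
        have h2 : D j b * (bt - b) ≤ ∫ u in b..bt, D j u := by
          calc D j b * (bt - b) = ∫ _ in b..bt, D j b := by simp [mul_comm]
            _ ≤ ∫ u in b..bt, D j u := by
                apply intervalIntegral.integral_mono_on h intervalIntegrable_const
                  (hint j b bt)
                intro u hu; exact hmono j hu.1
        rw [h1]; linarith
    nlinarith [hle]
  -- aggregate
  have step1 : ∑ j, ∑ b ∈ P j, γ j b * (bt * D j b - C j) ≤
      ∑ j, ∑ b ∈ P j, γ j b * (D j b * b - ∫ u in (0:ℝ)..b, D j u) := by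
    apply Finset.sum_le_sum; intro j _
    apply Finset.sum_le_sum; intro b hb
    exact mul_le_mul_of_nonneg_left (key j b hb) (hγnn j b hb)
  have step2 : ∀ j, ∑ b ∈ P j, γ j b * (bt * D j b - C j)
      = bt * (∑ b ∈ P j, γ j b * D j b) - (∑ b ∈ P j, γ j b) * C j := by
    intro j
    rw [Finset.mul_sum, Finset.sum_mul, ← Finset.sum_sub_distrib]
    congr 1; ext b; ring
  have step3 : It * bt - ∑ j, C j ≤ ∑ j, ∑ b ∈ P j, γ j b * (bt * D j b - C j) := by
    have h1 : It * bt ≤ bt * ∑ j, ∑ b ∈ P j, γ j b * D j b := by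
      rw [mul_comm It bt]
      exact mul_le_mul_of_nonneg_left hfeas hbtnn
    have h2 : ∑ j, (∑ b ∈ P j, γ j b) * C j ≤ ∑ j, C j := by
      apply Finset.sum_le_sum; intro j _
      calc (∑ b ∈ P j, γ j b) * C j ≤ 1 * C j :=
            mul_le_mul_of_nonneg_right (hγsum j) (hCnn j)
        _ = C j := one_mul _
    calc It * bt - ∑ j, C j
        ≤ bt * (∑ j, ∑ b ∈ P j, γ j b * D j b) - ∑ j, (∑ b ∈ P j, γ j b) * C j := by
          linarith
      _ = ∑ j, (bt * (∑ b ∈ P j, γ j b * D j b) - (∑ b ∈ P j, γ j b) * C j) := by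
          rw [Finset.sum_sub_distrib, Finset.mul_sum]
      _ = ∑ j, ∑ b ∈ P j, γ j b * (bt * D j b - C j) := by
          simp_rw [step2]
  rw [hsum]
  linarith
end

section
/- Let D : [0,∞) → [0,∞) be non-decreasing and right-continuous, I > 0, b* = inf{b : D(b) ≥ I}, and suppose D(b*) ≥ I. Then the cost of the pure strategy of bidding b* for all requests exceeds the lower bound I·b* − ∫₀^{b*} D(u) du by at most ((D(b*) − D⁻(b*))/D(b*)) · ∫₀^{b*} D(u) du, where the pure strategy bids b* on a fraction I/D(b*) of requests. -/
/-! The excess cost equals `((D b* - I) / D b*) · ∫₀^{b*} D`, and `D⁻(b*) ≤ I` because `D < I`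
on `[0, b*)` by minimality of `b*`. -/

open MeasureTheory Topology

lemma pure_strategy_excess_eq (I d b C : ℝ) (hd : d ≠ 0) :
    I / d * (d * b - C) - (I * b - C) = (d - I) / d * C := by
  field_simp
  ring

lemma le_of_tendsto_nhdsLT_of_isLeast {D : ℝ → ℝ} {I b L : ℝ}
    (hb : IsLeast {b : ℝ | 0 ≤ b ∧ I ≤ D b} b) (hpos : 0 < b)
    (hL : Filter.Tendsto D (𝓝[<] b) (𝓝 L)) : L ≤ I := by
  refine le_of_tendsto hL ?_
  filter_upwards [Ioo_mem_nhdsLT hpos] with u hu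
  by_contra! hIu
  exact (hb.2 ⟨hu.1.le, hIu.le⟩).not_gt hu.2

theorem stmt7_general (D : ℝ → ℝ)
    (hnn : ∀ b, 0 ≤ D b) (I : ℝ) (hI : 0 < I)
    (bstar : ℝ) (hbstar : IsLeast {b : ℝ | 0 ≤ b ∧ I ≤ D b} bstar)
    (Dminus : ℝ) (hDminus : Filter.Tendsto D (𝓝[<] bstar) (𝓝 Dminus)) :
    (I / D bstar) * (D bstar * bstar - ∫ u in (0:ℝ)..bstar, D u) -
        (I * bstar - ∫ u in (0:ℝ)..bstar, D u) ≤
      ((D bstar - Dminus) / D bstar) * ∫ u in (0:ℝ)..bstar, D u := by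
  have hDb : 0 < D bstar := hI.trans_le hbstar.1.2
  rw [pure_strategy_excess_eq _ _ _ _ hDb.ne']
  rcases hbstar.1.1.eq_or_lt with h0 | hpos
  · simp [← h0]
  · have hC : 0 ≤ ∫ u in (0:ℝ)..bstar, D u :=
      intervalIntegral.integral_nonneg hpos.le fun u _ => hnn u
    have hDm : Dminus ≤ I := le_of_tendsto_nhdsLT_of_isLeast hbstar hpos hDminus
    gcongr

/-- The pure strategy bidding `b* = inf{b ≥ 0 : D b ≥ I}` with weight
`I / D b*` exceeds the lower bound `I·b* − ∫₀^{b*} D` by at most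
`((D b* − D⁻(b*)) / D b*) · ∫₀^{b*} D`. -/
theorem stmt7 (D : ℝ → ℝ) (hmono : Monotone D)
    (hrc : ∀ a : ℝ, ContinuousWithinAt D (Set.Ici a) a)
    (hnn : ∀ b, 0 ≤ D b) (I : ℝ) (hI : 0 < I)
    (bstar : ℝ) (hbstar : IsLeast {b : ℝ | 0 ≤ b ∧ I ≤ D b} bstar)
    (Dminus : ℝ) (hDminus : Filter.Tendsto D (𝓝[<] bstar) (𝓝 Dminus)) :
    (I / D bstar) * (D bstar * bstar - ∫ u in (0:ℝ)..bstar, D u) -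
        (I * bstar - ∫ u in (0:ℝ)..bstar, D u) ≤
      ((D bstar - Dminus) / D bstar) * ∫ u in (0:ℝ)..bstar, D u :=
  stmt7_general D hnn I hI bstar hbstar Dminus hDminus
end

section
/- Let D : [0,∞) → [0,∞) be a continuous non-decreasing supply curve, and suppose bids b₁ < b₂ with D(b₁) < D(b₂) are used by a single campaign at a single targeting group with weights γ₁, γ₂ > 0, acquiring I = γ₁·D(b₁) + γ₂·D(b₂) impressions. Then there exists a single bid value q with b₁ ≤ q ≤ b₂ and (γ₁+γ₂)·D(q) = I, and using bid q with weight γ₁+γ₂ obtains the same number of impressions at cost no greater than the two-bid allocation. -/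
open MeasureTheory Topology

/-- Merging two bids into one: for a continuous non-decreasing supply curve,
if bids `b₁ < b₂` with `D b₁ < D b₂` and weights `γ₁, γ₂ > 0` acquire
`I = γ₁·D b₁ + γ₂·D b₂` impressions, then there is a single bid `q ∈ [b₁, b₂]` with
`(γ₁+γ₂)·D q = I` whose cost does not exceed that of the two-bid allocation. -/
theorem stmt9 (D : ℝ → ℝ) (hmono : Monotone D) (hcont : Continuous D)
    (hnn : ∀ b, 0 ≤ D b)
    (b₁ b₂ : ℝ) (hb₁nn : 0 ≤ b₁) (hb₁₂ : b₁ < b₂) (hD₁₂ : D b₁ < D b₂)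
    (γ₁ γ₂ : ℝ) (hγ₁ : 0 < γ₁) (hγ₂ : 0 < γ₂) :
    ∃ q : ℝ, b₁ ≤ q ∧ q ≤ b₂ ∧
      (γ₁ + γ₂) * D q = γ₁ * D b₁ + γ₂ * D b₂ ∧
      (γ₁ + γ₂) * (D q * q - ∫ u in (0:ℝ)..q, D u) ≤
        γ₁ * (D b₁ * b₁ - ∫ u in (0:ℝ)..b₁, D u) +
          γ₂ * (D b₂ * b₂ - ∫ u in (0:ℝ)..b₂, D u) := by
  have hsum : 0 < γ₁ + γ₂ := by linarith
  have hmem : (γ₁ * D b₁ + γ₂ * D b₂) / (γ₁ + γ₂) ∈ Set.Icc (D b₁) (D b₂) := by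
    constructor
    · rw [le_div_iff₀ hsum]; nlinarith
    · rw [div_le_iff₀ hsum]; nlinarith
  obtain ⟨q, hq, hDq⟩ := intermediate_value_Icc hb₁₂.le hcont.continuousOn hmem
  have heq : (γ₁ + γ₂) * D q = γ₁ * D b₁ + γ₂ * D b₂ := by
    rw [hDq]; field_simp
  refine ⟨q, hq.1, hq.2, heq, ?_⟩
  have hi : ∀ a b : ℝ, IntervalIntegrable D volume a b :=
    fun a b => hcont.intervalIntegrable a b
  have hint1 : D b₁ * (q - b₁) ≤ ∫ u in b₁..q, D u := by
    have := intervalIntegral.integral_mono_on hq.1 (intervalIntegrable_const)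
      (hi b₁ q) (fun x hx => hmono hx.1)
    simpa [mul_comm] using this
  have hint2 : (∫ u in q..b₂, D u) ≤ D b₂ * (b₂ - q) := by
    have := intervalIntegral.integral_mono_on hq.2 (hi q b₂)
      (intervalIntegrable_const) (fun x hx => hmono hx.2)
    simpa [mul_comm] using this
  have hs1 : (∫ u in (0:ℝ)..b₁, D u) + ∫ u in b₁..q, D u = ∫ u in (0:ℝ)..q, D u :=
    intervalIntegral.integral_add_adjacent_intervals (hi 0 b₁) (hi b₁ q)
  have hs2 : (∫ u in (0:ℝ)..q, D u) + ∫ u in q..b₂, D u = ∫ u in (0:ℝ)..b₂, D u :=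
    intervalIntegral.integral_add_adjacent_intervals (hi 0 q) (hi q b₂)
  have h0 : q * ((γ₁ + γ₂) * D q) = q * (γ₁ * D b₁ + γ₂ * D b₂) := by rw [heq]
  nlinarith [mul_le_mul_of_nonneg_left hint1 hγ₁.le,
    mul_le_mul_of_nonneg_left hint2 hγ₂.le]
end

section
/- Let D : [0,∞) → [0,∞) be non-decreasing and right-continuous, I > 0, and b* with D(b*) ≥ I, D(b) < I for b < b*. Suppose a mixed strategy s has finite bid set P with D(b) ≥ I for all b ∈ P, weights γ(b) with Σ_{b∈P} γ(b)·D(b) = I. Then C(s) = Σ_{b∈P} γ(b)·(D(b)·b − ∫₀ᵇ D(u) du) ≥ I·b* − ∫₀^{b*} D(u) du. -/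
open MeasureTheory Topology

/-- If a mixed strategy uses only bids `b` with `D b ≥ I` and obtains
exactly `I` impressions, then its cost is at least `I·b* − ∫₀^{b*} D`, where `b*` is the
critical bid for target `I`. -/
theorem stmt11 (D : ℝ → ℝ) (hmono : Monotone D)
    (hrc : ∀ a : ℝ, ContinuousWithinAt D (Set.Ici a) a)
    (hnn : ∀ b, 0 ≤ D b) (I : ℝ) (hI : 0 < I)
    (bstar : ℝ) (hbstarnn : 0 ≤ bstar) (hDbstar : I ≤ D bstar)
    (hcrit : ∀ b, 0 ≤ b → b < bstar → D b < I)
    (P : Finset ℝ) (γ : ℝ → ℝ)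
    (hPnn : ∀ b ∈ P, 0 ≤ b) (hγnn : ∀ b ∈ P, 0 ≤ γ b)
    (hPhigh : ∀ b ∈ P, I ≤ D b)
    (hexact : (∑ b ∈ P, γ b * D b) = I) :
    I * bstar - (∫ u in (0:ℝ)..bstar, D u) ≤
      ∑ b ∈ P, γ b * (D b * b - ∫ u in (0:ℝ)..b, D u) := by
  set J : ℝ := ∫ u in (0:ℝ)..bstar, D u with hJ
  have hint : ∀ x y : ℝ, IntervalIntegrable D MeasureTheory.volume x y := fun x y =>
    (hmono.monotoneOn _).intervalIntegrable
  have hJnn : 0 ≤ J := intervalIntegral.integral_nonneg hbstarnn (fun u _ => hnn u)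
  -- every bid is at least bstar
  have hge : ∀ b ∈ P, bstar ≤ b := by
    intro b hb
    by_contra h
    exact absurd (hcrit b (hPnn b hb) (lt_of_not_ge h)) (not_lt.2 (hPhigh b hb))
  -- per-bid cost bound
  have hkey : ∀ b ∈ P, D b * bstar - J ≤ D b * b - ∫ u in (0:ℝ)..b, D u := by
    intro b hb
    have hbs := hge b hb
    have hsplit : (∫ u in (0:ℝ)..b, D u) = J + ∫ u in bstar..b, D u :=
      (intervalIntegral.integral_add_adjacent_intervals (hint 0 bstar) (hint bstar b)).symm
    have htail : (∫ u in bstar..b, D u) ≤ D b * (b - bstar) := by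
      have : (∫ u in bstar..b, D u) ≤ ∫ u in bstar..b, D b := by
        apply intervalIntegral.integral_mono_on hbs (hint bstar b)
          intervalIntegrable_const
        intro u hu
        exact hmono hu.2
      simpa [mul_comm] using this
    rw [hsplit]
    nlinarith
  -- sum up
  have hsum : ∑ b ∈ P, γ b * (D b * bstar - J) ≤
      ∑ b ∈ P, γ b * (D b * b - ∫ u in (0:ℝ)..b, D u) := by
    apply Finset.sum_le_sum
    intro b hb
    exact mul_le_mul_of_nonneg_left (hkey b hb) (hγnn b hb)
  refine le_trans ?_ hsum
  have hsplit2 : ∑ b ∈ P, γ b * (D b * bstar - J)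
      = bstar * (∑ b ∈ P, γ b * D b) - J * ∑ b ∈ P, γ b := by
    rw [Finset.mul_sum, Finset.mul_sum, ← Finset.sum_sub_distrib]
    apply Finset.sum_congr rfl
    intro b _; ring
  have hγle1 : ∑ b ∈ P, γ b ≤ 1 := by
    have h1 : I * ∑ b ∈ P, γ b ≤ I := by
      calc I * ∑ b ∈ P, γ b = ∑ b ∈ P, γ b * I := by rw [Finset.mul_sum]; apply Finset.sum_congr rfl; intro b _; ring
        _ ≤ ∑ b ∈ P, γ b * D b := Finset.sum_le_sum fun b hb =>
            mul_le_mul_of_nonneg_left (hPhigh b hb) (hγnn b hb)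
        _ = I := hexact
    nlinarith
  rw [hsplit2, hexact]
  nlinarith
end

section
/- Let D_p, D_0 : [0,∞) → [0,∞) be non-decreasing right-continuous, and let I_p > 0, p* ≥ 0 satisfy D_p(p*) ≥ I_p, D_p(b) < I_p for b < p*, and D_0(p*) = 0. For any 0 < Δ ≤ I_p: (a) the minimal-bid cost lower bound of obtaining Δ impressions from D_0, namely Δ·q − ∫_{p*}^q D_0(u) du where q = inf{b : D_0(b) ≥ Δ}, is at least Δ·p*; and (b) the reduction in the lower bound for D_p from shifting Δ impressions away, namely (I_p·p* − ∫₀^{p*} D_p) − ((I_p−Δ)·p' − ∫₀^{p'} D_p) with p' = inf{b : D_p(b) ≥ I_p − Δ}, is at most Δ·p*. Hence shifting impressions from the component at price p* to a zero-supply-below-p* group cannot decrease total cost. -/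
open MeasureTheory Topology

/-- Shifting `Δ` impressions from a component with critical price `p*`
(aggregate supply `D_p`) to targeting groups with zero supply up to `p*` (aggregate `D₀`)
cannot decrease cost: (a) the lower-bound cost of getting `Δ` impressions from `D₀`,
`Δ·q − ∫_{p*}^q D₀` with `q` the critical bid, is at least `Δ·p*`; and (b) the reduction
in the `D_p` lower bound is at most `Δ·p*`. -/
theorem stmt12 (Dp D0 : ℝ → ℝ)
    (hmonop : Monotone Dp) (hmono0 : Monotone D0)
    (hrcp : ∀ a : ℝ, ContinuousWithinAt Dp (Set.Ici a) a)
    (hrc0 : ∀ a : ℝ, ContinuousWithinAt D0 (Set.Ici a) a)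
    (hnnp : ∀ b, 0 ≤ Dp b) (hnn0 : ∀ b, 0 ≤ D0 b)
    (Ip : ℝ) (hIp : 0 < Ip)
    (pstar : ℝ) (hpstar : 0 ≤ pstar)
    (hDppstar : Ip ≤ Dp pstar)
    (hcritp : ∀ b, 0 ≤ b → b < pstar → Dp b < Ip)
    (hD0zero : ∀ b, b ≤ pstar → D0 b = 0)
    (Δ : ℝ) (hΔpos : 0 < Δ) (hΔle : Δ ≤ Ip)
    (q : ℝ) (hq : pstar ≤ q) (hD0q : Δ ≤ D0 q)
    (hcrit0 : ∀ b, 0 ≤ b → b < q → D0 b < Δ)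
    (p' : ℝ) (hp'nn : 0 ≤ p') (hDpp' : Ip - Δ ≤ Dp p')
    (hcritp' : ∀ b, 0 ≤ b → b < p' → Dp b < Ip - Δ) :
    Δ * pstar ≤ Δ * q - (∫ u in pstar..q, D0 u) ∧
    (Ip * pstar - ∫ u in (0:ℝ)..pstar, Dp u) -
        ((Ip - Δ) * p' - ∫ u in (0:ℝ)..p', Dp u) ≤ Δ * pstar := by
  constructor
  · -- part (a)
    have hInt0 : IntervalIntegrable D0 volume pstar q :=
      (hmono0.monotoneOn _).intervalIntegrable
    have hae : ∀ᵐ u ∂(volume.restrict (Set.Icc pstar q)), D0 u ≤ Δ := by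
      have hne : ∀ᵐ u : ℝ ∂volume, u ≠ q := by
        refine (MeasureTheory.ae_iff).2 ?_
        simp [Set.setOf_eq_eq_singleton]
      refine (ae_restrict_iff' measurableSet_Icc).2 ?_
      filter_upwards [hne] with u hu hmem
      rcases hmem with ⟨h1, h2⟩
      have hlt : u < q := lt_of_le_of_ne h2 hu
      exact (hcrit0 u (le_trans hpstar h1) hlt).le
    have hle : (∫ u in pstar..q, D0 u) ≤ ∫ u in pstar..q, (Δ : ℝ) :=
      intervalIntegral.integral_mono_ae_restrict hq hInt0 intervalIntegrable_const hae
    have hc : (∫ u in pstar..q, (Δ : ℝ)) = (q - pstar) * Δ := by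
      simp [intervalIntegral.integral_const, smul_eq_mul]
    nlinarith [hle]
  · -- part (b)
    have hp'le : p' ≤ pstar := by
      by_contra h
      push_neg at h
      have := hcritp' pstar hpstar h
      linarith
    have hIntA : IntervalIntegrable Dp volume 0 p' :=
      (hmonop.monotoneOn _).intervalIntegrable
    have hIntB : IntervalIntegrable Dp volume p' pstar :=
      (hmonop.monotoneOn _).intervalIntegrable
    have hsplit : (∫ u in (0:ℝ)..p', Dp u) + (∫ u in p'..pstar, Dp u)
        = ∫ u in (0:ℝ)..pstar, Dp u :=
      intervalIntegral.integral_add_adjacent_intervals hIntA hIntB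
    have hlow : (∫ u in p'..pstar, (Ip - Δ)) ≤ ∫ u in p'..pstar, Dp u := by
      refine intervalIntegral.integral_mono_on hp'le intervalIntegrable_const hIntB ?_
      intro u hu
      exact le_trans hDpp' (hmonop hu.1)
    have hc : (∫ u in p'..pstar, (Ip - Δ)) = (pstar - p') * (Ip - Δ) := by
      simp [intervalIntegral.integral_const, smul_eq_mul]
      ring
    nlinarith [hlow]
end

section
/- Let D_p, D_q : [0,∞) → [0,∞) be non-decreasing right-continuous, with critical prices p* < q* for targets I_p, I_q > 0 (i.e., D_p(p*) ≥ I_p, D_p(b) < I_p for b < p*, and similarly for D_q, I_q, q*). For 0 < Δ ≤ I_p, let p' = inf{b : D_p(b) ≥ I_p − Δ} and q' = inf{b : D_q(b) ≥ I_q + Δ}. Then the decrease in the D_p lower bound, (I_p·p* − ∫₀^{p*} D_p) − ((I_p−Δ)·p' − ∫₀^{p'} D_p), is at most Δ·p*, while the increase in the D_q lower bound, ((I_q+Δ)·q' − ∫₀^{q'} D_q) − (I_q·q* − ∫₀^{q*} D_q), is at least Δ·q*. Since p* < q*, shifting Δ impressions from the p*-component to the q*-component cannot decrease the total lower-bound cost.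 -/
open MeasureTheory Topology

/-- Shifting `Δ` impressions from a component with critical price `p*` to
one with higher critical price `q*` cannot decrease the total lower-bound cost: the
decrease in the `D_p` bound is at most `Δ·p*` while the increase in the `D_q` bound is at
least `Δ·q*`, and `p* < q*`. -/
theorem stmt13 (Dp Dq : ℝ → ℝ)
    (hmonop : Monotone Dp) (hmonoq : Monotone Dq)
    (hrcp : ∀ a : ℝ, ContinuousWithinAt Dp (Set.Ici a) a)
    (hrcq : ∀ a : ℝ, ContinuousWithinAt Dq (Set.Ici a) a)
    (hnnp : ∀ b, 0 ≤ Dp b) (hnnq : ∀ b, 0 ≤ Dq b)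
    (Ip Iq : ℝ) (hIp : 0 < Ip) (hIq : 0 < Iq)
    (pstar qstar : ℝ) (hpq : pstar < qstar)
    (hDppstar : Ip ≤ Dp pstar) (hcritp : ∀ b, 0 ≤ b → b < pstar → Dp b < Ip)
    (hDqqstar : Iq ≤ Dq qstar) (hcritq : ∀ b, 0 ≤ b → b < qstar → Dq b < Iq)
    (Δ : ℝ) (hΔpos : 0 < Δ) (hΔle : Δ ≤ Ip)
    (p' q' : ℝ) (hp'nn : 0 ≤ p') (hp'le : p' ≤ pstar) (hq'ge : qstar ≤ q')
    (hDpp' : Ip - Δ ≤ Dp p') (hcritp' : ∀ b, 0 ≤ b → b < p' → Dp b < Ip - Δ)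
    (hDqq' : Iq + Δ ≤ Dq q') (hcritq' : ∀ b, 0 ≤ b → b < q' → Dq b < Iq + Δ) :
    (Ip * pstar - ∫ u in (0:ℝ)..pstar, Dp u) -
        ((Ip - Δ) * p' - ∫ u in (0:ℝ)..p', Dp u) ≤ Δ * pstar ∧
    Δ * qstar ≤ ((Iq + Δ) * q' - ∫ u in (0:ℝ)..q', Dq u) -
        (Iq * qstar - ∫ u in (0:ℝ)..qstar, Dq u) := by
  have hq0 : (0:ℝ) ≤ qstar := le_trans hp'nn (le_of_lt (lt_of_le_of_lt hp'le hpq))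
  constructor
  · have key : (Ip - Δ) * (pstar - p') ≤ ∫ u in p'..pstar, Dp u := by
      have h := intervalIntegral.integral_mono_on (μ := volume) hp'le
        (intervalIntegrable_const (c := Ip - Δ)) hmonop.intervalIntegrable
        (fun x hx => le_trans hDpp' (hmonop hx.1))
      rw [intervalIntegral.integral_const, smul_eq_mul] at h
      linarith
    have hsplit : (∫ u in (0:ℝ)..p', Dp u) + (∫ u in p'..pstar, Dp u)
        = ∫ u in (0:ℝ)..pstar, Dp u :=
      intervalIntegral.integral_add_adjacent_intervals
        hmonop.intervalIntegrable hmonop.intervalIntegrable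
    nlinarith [key, hsplit]
  · have hne : ∀ᵐ x : ℝ, x ≠ q' := by
      rw [ae_iff]
      simpa using measure_singleton (α := ℝ) q'
    have hae : Dq ≤ᵐ[(volume : Measure ℝ).restrict (Set.Icc qstar q')]
        fun _ => Iq + Δ := by
      filter_upwards [ae_restrict_mem measurableSet_Icc, ae_restrict_of_ae hne]
        with x hx hxne
      exact le_of_lt (hcritq' x (le_trans hq0 hx.1) (lt_of_le_of_ne hx.2 hxne))
    have key : (∫ u in qstar..q', Dq u) ≤ (Iq + Δ) * (q' - qstar) := by
      have h := intervalIntegral.integral_mono_ae_restrict hq'ge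
        hmonoq.intervalIntegrable (intervalIntegrable_const (c := Iq + Δ)) hae
      rw [intervalIntegral.integral_const, smul_eq_mul] at h
      linarith
    have hsplit : (∫ u in (0:ℝ)..qstar, Dq u) + (∫ u in qstar..q', Dq u)
        = ∫ u in (0:ℝ)..q', Dq u :=
      intervalIntegral.integral_add_adjacent_intervals
        hmonoq.intervalIntegrable hmonoq.intervalIntegrable
    nlinarith [key, hsplit]
end

section
/- Consider the optimization problem of N_c campaigns and N_r targeting groups with continuous non-decreasing supply curves D_j. In any optimal solution (b*, γ*), for each campaign i the supply fraction achieved across its used targeting groups is determined by a common price: there exists p*_i such that D_j(b*_{i,j}) = D_j(p*_i) for all targeting groups j from which campaign i receives positive impressions. Equivalently, if campaign i uses two targeting groups m, n with D_m(b_{i,m}) ≠ D_m(b_{i,n}) (interpreting bid values, with b_{i,m} ≠ b_{i,n}), one can strictly reduce cost by replacing both bids with a common bid p*_i satisfying γ_{i,m}·D_m(p*_i) + γ_{i,n}·D_n(p*_i) = γ_{i,m}·D_m(b_{i,m}) + γ_{i,n}·D_n(b_{i,n}). -/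
open MeasureTheory Topology


/-- If a monotone continuous function has zero "excess area" over `[a,c]`
relative to its value at `a`, it is equal at the right endpoint too. -/
lemma endpoint_right (D : ℝ → ℝ) (hm : Monotone D) (hc : Continuous D) {a c : ℝ}
    (hac : a ≤ c) (h0 : (∫ u in a..c, (D u - D a)) = 0) : D c = D a := by
  by_contra h
  have hlt : D a < D c := lt_of_le_of_ne (hm hac) (Ne.symm h)
  have hac' : a < c := by
    rcases lt_or_eq_of_le hac with h' | h'
    · exact h'
    · exact absurd (by rw [h']) (ne_of_lt hlt)
  -- find x in [a,c] with D x = midpoint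
  have hmid : (D a + D c) / 2 ∈ Set.Icc (D a) (D c) := by constructor <;> linarith
  obtain ⟨x, hx, hDx⟩ := intermediate_value_Icc hac hc.continuousOn hmid
  have hDxa : D a < D x := by rw [hDx]; linarith
  have hDxc : D x < D c := by rw [hDx]; linarith
  have hxc : x < c := lt_of_le_of_ne hx.2 (by rintro rfl; exact absurd rfl (ne_of_lt hDxc))
  have hint : ∀ p q : ℝ, IntervalIntegrable (fun u => D u - D a) volume p q :=
    fun p q => ((hc.sub continuous_const).intervalIntegrable p q)
  have hsplit : (∫ u in a..x, (D u - D a)) + (∫ u in x..c, (D u - D a)) =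
      ∫ u in a..c, (D u - D a) :=
    intervalIntegral.integral_add_adjacent_intervals (hint a x) (hint x c)
  have h1 : 0 ≤ ∫ u in a..x, (D u - D a) := by
    apply intervalIntegral.integral_nonneg hx.1
    intro u hu; simp only [sub_nonneg]; exact hm hu.1
  have h2 : (D x - D a) * (c - x) ≤ ∫ u in x..c, (D u - D a) := by
    have := intervalIntegral.integral_mono_on (le_of_lt hxc)
      (intervalIntegrable_const (c := D x - D a)) (hint x c)
      (fun u hu => by simp only [sub_le_sub_iff_right]; exact hm hu.1)
    simp only [intervalIntegral.integral_const, smul_eq_mul] at this; linarith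
  have : 0 < (D x - D a) * (c - x) := mul_pos (by linarith) (by linarith)
  linarith

/-- Symmetric version: zero "deficit area" relative to the value at `c`. -/
lemma endpoint_left (D : ℝ → ℝ) (hm : Monotone D) (hc : Continuous D) {a c : ℝ}
    (hac : a ≤ c) (h0 : (∫ u in a..c, (D c - D u)) = 0) : D a = D c := by
  by_contra h
  have hlt : D a < D c := lt_of_le_of_ne (hm hac) h
  have hac' : a < c := by
    rcases lt_or_eq_of_le hac with h' | h'
    · exact h'
    · exact absurd (by rw [h']) (ne_of_lt hlt)
  have hmid : (D a + D c) / 2 ∈ Set.Icc (D a) (D c) := by constructor <;> linarith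
  obtain ⟨x, hx, hDx⟩ := intermediate_value_Icc hac hc.continuousOn hmid
  have hDxa : D a < D x := by rw [hDx]; linarith
  have hDxc : D x < D c := by rw [hDx]; linarith
  have hax : a < x := lt_of_le_of_ne hx.1 (by rintro rfl; exact absurd rfl (ne_of_lt hDxa))
  have hint : ∀ p q : ℝ, IntervalIntegrable (fun u => D c - D u) volume p q :=
    fun p q => ((continuous_const.sub hc).intervalIntegrable p q)
  have hsplit : (∫ u in a..x, (D c - D u)) + (∫ u in x..c, (D c - D u)) =
      ∫ u in a..c, (D c - D u) :=
    intervalIntegral.integral_add_adjacent_intervals (hint a x) (hint x c)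
  have h1 : 0 ≤ ∫ u in x..c, (D c - D u) := by
    apply intervalIntegral.integral_nonneg hx.2
    intro u hu; simp only [sub_nonneg]; exact hm hu.2
  have h2 : (D c - D x) * (x - a) ≤ ∫ u in a..x, (D c - D u) := by
    have := intervalIntegral.integral_mono_on (le_of_lt hax)
      (intervalIntegrable_const (c := D c - D x)) (hint a x)
      (fun u hu => by simp only [sub_le_sub_iff_left]; exact hm hu.2)
    simp only [intervalIntegral.integral_const, smul_eq_mul] at this; linarith
  have : 0 < (D c - D x) * (x - a) := mul_pos (by linarith) (by linarith)
  linarith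

lemma sum_split_two {α : Type*} [DecidableEq α] (s : Finset α) {m n : α}
    (hm : m ∈ s) (hn : n ∈ s) (hmn : m ≠ n) (F : α → ℝ) :
    ∑ j ∈ s, F j = F m + (F n + ∑ j ∈ (s.erase m).erase n, F j) := by
  rw [Finset.add_sum_erase _ F (Finset.mem_erase.2 ⟨hmn.symm, hn⟩),
    Finset.add_sum_erase _ F hm]

/-- In an optimal solution of the multi-campaign cost-minimization problem
with continuous non-decreasing supply curves, for each campaign `i` there is a common
price `p*_i` such that `D_j (b*_{i,j}) = D_j p*_i` for every targeting group `j` from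
which campaign `i` receives positive impressions. -/
theorem stmt15 (Nc Nr : ℕ)
    (I : Fin Nc → ℝ) (hI : ∀ i, 0 < I i)
    (D : Fin Nr → ℝ → ℝ)
    (hmono : ∀ j, Monotone (D j)) (hcont : ∀ j, Continuous (D j))
    (hnn : ∀ j b, 0 ≤ D j b)
    (A : Fin Nc → Finset (Fin Nr)) (B : Fin Nr → Finset (Fin Nc))
    (hAB : ∀ i j, i ∈ B j ↔ j ∈ A i)
    (b γ : Fin Nc → Fin Nr → ℝ)
    (hbnn : ∀ i j, 0 ≤ b i j) (hγnn : ∀ i j, 0 ≤ γ i j)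
    (hfeas1 : ∀ i, I i ≤ ∑ j ∈ A i, γ i j * D j (b i j))
    (hfeas2 : ∀ j, (∑ i ∈ B j, γ i j) ≤ 1)
    (hopt : ∀ b' γ' : Fin Nc → Fin Nr → ℝ,
      (∀ i j, 0 ≤ b' i j) → (∀ i j, 0 ≤ γ' i j) →
      (∀ i, I i ≤ ∑ j ∈ A i, γ' i j * D j (b' i j)) →
      (∀ j, (∑ i ∈ B j, γ' i j) ≤ 1) →
      (∑ i, ∑ j ∈ A i, γ i j * (D j (b i j) * b i j - ∫ u in (0:ℝ)..(b i j), D j u)) ≤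
        ∑ i, ∑ j ∈ A i, γ' i j * (D j (b' i j) * b' i j - ∫ u in (0:ℝ)..(b' i j), D j u)) :
    ∀ i : Fin Nc, ∃ pstar : ℝ,
      ∀ j ∈ A i, 0 < γ i j * D j (b i j) → D j (b i j) = D j pstar := by
  intro i
  -- Pairwise exchange lemma
  have key : ∀ m n : Fin Nr, m ∈ A i → n ∈ A i → m ≠ n → b i m ≤ b i n →
      0 < γ i m → 0 < γ i n →
      ∃ p, b i m ≤ p ∧ p ≤ b i n ∧ D m (b i m) = D m p ∧ D n (b i n) = D n p := by
    intro m n hmA hnA hmn hbmn hγm hγn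
    set bm := b i m with hbm
    set bn := b i n with hbn
    -- intermediate value
    have hfcont : Continuous (fun x => γ i m * D m x + γ i n * D n x) :=
      (continuous_const.mul (hcont m)).add (continuous_const.mul (hcont n))
    set T := γ i m * D m bm + γ i n * D n bn with hT
    have hTmem : T ∈ Set.Icc (γ i m * D m bm + γ i n * D n bm)
        (γ i m * D m bn + γ i n * D n bn) := by
      constructor
      · have := mul_le_mul_of_nonneg_left (hmono n hbmn) (le_of_lt hγn); linarith
      · have := mul_le_mul_of_nonneg_left (hmono m hbmn) (le_of_lt hγm); linarith
    obtain ⟨p, hp, hfp⟩ := intermediate_value_Icc hbmn hfcont.continuousOn hTmem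
    simp only at hfp
    refine ⟨p, hp.1, hp.2, ?_⟩
    -- modified bids
    classical
    set b' : Fin Nc → Fin Nr → ℝ :=
      fun i' j' => if i' = i ∧ (j' = m ∨ j' = n) then p else b i' j' with hb'
    have hb'i_m : b' i m = p := by simp [hb']
    have hb'i_n : b' i n = p := by simp [hb']
    have hb'other : ∀ i' j', i' ≠ i → b' i' j' = b i' j' := by
      intro i' j' h; simp [hb', h]
    have hb'i_other : ∀ j', j' ≠ m → j' ≠ n → b' i j' = b i j' := by
      intro j' h1 h2; simp [hb', h1, h2]
    have hb'nn : ∀ i' j', 0 ≤ b' i' j' := by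
      intro i' j'
      by_cases h : i' = i ∧ (j' = m ∨ j' = n)
      · simp only [hb', if_pos h]; exact le_trans (hbnn i m) hp.1
      · simp only [hb', if_neg h]; exact hbnn i' j'
    -- feasibility
    have hfeas1' : ∀ i', I i' ≤ ∑ j ∈ A i', γ i' j * D j (b' i' j) := by
      intro i'
      by_cases hii : i' = i
      · subst hii
        have heq : ∑ j ∈ A i', γ i' j * D j (b' i' j) =
            ∑ j ∈ A i', γ i' j * D j (b i' j) := by
          rw [sum_split_two (A i') hmA hnA hmn (fun j => γ i' j * D j (b' i' j)),
            sum_split_two (A i') hmA hnA hmn (fun j => γ i' j * D j (b i' j))]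
          have hrest : ∑ j ∈ ((A i').erase m).erase n, γ i' j * D j (b' i' j) =
              ∑ j ∈ ((A i').erase m).erase n, γ i' j * D j (b i' j) := by
            apply Finset.sum_congr rfl
            intro j hj
            rw [hb'i_other j (Finset.ne_of_mem_erase (Finset.mem_of_mem_erase hj))
              (Finset.ne_of_mem_erase hj)]
          rw [hrest, hb'i_m, hb'i_n]
          linarith [hfp]
        rw [heq]; exact hfeas1 i'
      · have heq : ∑ j ∈ A i', γ i' j * D j (b' i' j) =
            ∑ j ∈ A i', γ i' j * D j (b i' j) := by
          apply Finset.sum_congr rfl; intro j hj; rw [hb'other i' j hii]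
        rw [heq]; exact hfeas1 i'
    -- optimality
    have hcost := hopt b' γ hb'nn hγnn hfeas1' hfeas2
    -- reduce to campaign i
    set C : (Fin Nc → Fin Nr → ℝ) → Fin Nc → ℝ := fun bb i' =>
      ∑ j ∈ A i', γ i' j * (D j (bb i' j) * bb i' j - ∫ u in (0:ℝ)..(bb i' j), D j u)
      with hC
    have hCother : ∀ i', i' ≠ i → C b' i' = C b i' := by
      intro i' h
      apply Finset.sum_congr rfl; intro j hj; rw [hb'other i' j h]
    have houter : C b i ≤ C b' i := by
      have h1 : ∑ i', C b i' ≤ ∑ i', C b' i' := hcost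
      rw [← Finset.add_sum_erase _ (C b) (Finset.mem_univ i),
        ← Finset.add_sum_erase _ (C b') (Finset.mem_univ i)] at h1
      have h2 : ∑ i' ∈ Finset.univ.erase i, C b' i' =
          ∑ i' ∈ Finset.univ.erase i, C b i' := by
        apply Finset.sum_congr rfl; intro i' hi'
        exact hCother i' (Finset.ne_of_mem_erase hi')
      rw [h2] at h1; linarith
    -- extract the two terms
    have hinner : γ i m * (D m bm * bm - ∫ u in (0:ℝ)..bm, D m u) +
        γ i n * (D n bn * bn - ∫ u in (0:ℝ)..bn, D n u) ≤
        γ i m * (D m p * p - ∫ u in (0:ℝ)..p, D m u) +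
        γ i n * (D n p * p - ∫ u in (0:ℝ)..p, D n u) := by
      have e1 := sum_split_two (A i) hmA hnA hmn
        (fun j => γ i j * (D j (b i j) * b i j - ∫ u in (0:ℝ)..(b i j), D j u))
      have e2 := sum_split_two (A i) hmA hnA hmn
        (fun j => γ i j * (D j (b' i j) * b' i j - ∫ u in (0:ℝ)..(b' i j), D j u))
      have hrest : ∑ j ∈ ((A i).erase m).erase n,
          γ i j * (D j (b' i j) * b' i j - ∫ u in (0:ℝ)..(b' i j), D j u) =
          ∑ j ∈ ((A i).erase m).erase n,
          γ i j * (D j (b i j) * b i j - ∫ u in (0:ℝ)..(b i j), D j u) := by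
        apply Finset.sum_congr rfl
        intro j hj
        rw [hb'i_other j (Finset.ne_of_mem_erase (Finset.mem_of_mem_erase hj))
          (Finset.ne_of_mem_erase hj)]
      have hCb : C b i = _ := e1
      have hCb' : C b' i = _ := e2
      rw [hCb, hCb'] at houter
      rw [hrest, hb'i_m, hb'i_n] at houter
      simp only [hbm, hbn] at *
      linarith
    -- integral bookkeeping
    set G := ∫ u in bm..p, (D m u - D m bm) with hG
    set H := ∫ u in p..bn, (D n bn - D n u) with hH
    have hGnn : 0 ≤ G := by
      apply intervalIntegral.integral_nonneg hp.1
      intro u hu; simp only [sub_nonneg]; exact hmono m hu.1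
    have hHnn : 0 ≤ H := by
      apply intervalIntegral.integral_nonneg hp.2
      intro u hu; simp only [sub_nonneg]; exact hmono n hu.2
    have hintm : ∀ x y : ℝ, IntervalIntegrable (D m) volume x y :=
      fun x y => (hcont m).intervalIntegrable x y
    have hintn : ∀ x y : ℝ, IntervalIntegrable (D n) volume x y :=
      fun x y => (hcont n).intervalIntegrable x y
    have hsplitm : (∫ u in (0:ℝ)..bm, D m u) + (∫ u in bm..p, D m u) =
        ∫ u in (0:ℝ)..p, D m u :=
      intervalIntegral.integral_add_adjacent_intervals (hintm 0 bm) (hintm bm p)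
    have hsplitn : (∫ u in (0:ℝ)..p, D n u) + (∫ u in p..bn, D n u) =
        ∫ u in (0:ℝ)..bn, D n u :=
      intervalIntegral.integral_add_adjacent_intervals (hintn 0 p) (hintn p bn)
    have hGval : (∫ u in bm..p, D m u) = G + D m bm * (p - bm) := by
      have : G = (∫ u in bm..p, D m u) - (∫ u in bm..p, (D m bm : ℝ)) := by
        rw [hG, intervalIntegral.integral_sub (hintm bm p) (intervalIntegrable_const)]
      rw [intervalIntegral.integral_const, smul_eq_mul] at this
      linarith
    have hHval : (∫ u in p..bn, D n u) = D n bn * (bn - p) - H := by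
      have : H = (∫ u in p..bn, (D n bn : ℝ)) - (∫ u in p..bn, D n u) := by
        rw [hH, intervalIntegral.integral_sub (intervalIntegrable_const) (hintn p bn)]
      rw [intervalIntegral.integral_const, smul_eq_mul] at this
      linarith
    -- combine: hinner says LHS ≤ RHS; compute RHS - LHS = -γm G - γn H + p (f p - T)
    have hzero : γ i m * G + γ i n * H ≤ 0 := by
      have expand : γ i m * (D m p * p - ∫ u in (0:ℝ)..p, D m u) +
          γ i n * (D n p * p - ∫ u in (0:ℝ)..p, D n u) -
          (γ i m * (D m bm * bm - ∫ u in (0:ℝ)..bm, D m u) +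
          γ i n * (D n bn * bn - ∫ u in (0:ℝ)..bn, D n u)) =
          p * ((γ i m * D m p + γ i n * D n p) - T) - γ i m * G - γ i n * H := by
        rw [← hsplitm, ← hsplitn, hGval, hHval, hT]; ring
      rw [hfp] at expand
      linarith
    have hG0 : G = 0 := by nlinarith
    have hH0 : H = 0 := by nlinarith
    exact ⟨(endpoint_right (D m) (hmono m) (hcont m) hp.1 hG0).symm,
      (endpoint_left (D n) (hmono n) (hcont n) hp.2 hH0).symm⟩
  -- Gluing via a Helly-type argument
  classical
  set S := (A i).filter (fun j => 0 < γ i j * D j (b i j)) with hS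
  by_cases hSne : S.Nonempty
  · -- for each j, the least nonnegative point where D j equals D j (b i j)
    have hq : ∀ j : Fin Nr, ∃ q : ℝ, 0 ≤ q ∧ D j q = D j (b i j) ∧
        ∀ r, 0 ≤ r → D j r = D j (b i j) → q ≤ r := by
      intro j
      set s : Set ℝ := {p | 0 ≤ p ∧ D j p = D j (b i j)} with hs
      have hclosed : IsClosed s := by
        apply IsClosed.inter
        · exact isClosed_le continuous_const continuous_id
        · exact isClosed_eq (hcont j) continuous_const
      have hne : s.Nonempty := ⟨b i j, hbnn i j, rfl⟩
      have hbdd : BddBelow s := ⟨0, fun x hx => hx.1⟩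
      have hmem := hclosed.csInf_mem hne hbdd
      exact ⟨sInf s, hmem.1, hmem.2, fun r hr1 hr2 => csInf_le hbdd ⟨hr1, hr2⟩⟩
    choose q hq0 hqD hqmin using hq
    obtain ⟨j0, hj0S, hj0max⟩ := S.exists_max_image q hSne
    refine ⟨q j0, ?_⟩
    intro k hkA hkpos
    have hkS : k ∈ S := Finset.mem_filter.2 ⟨hkA, hkpos⟩
    by_cases hkj0 : k = j0
    · subst hkj0; exact (hqD k).symm
    · -- use pairwise lemma on j0, k
      obtain ⟨hj0A, hj0pos⟩ := Finset.mem_filter.1 hj0S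
      have hγk : 0 < γ i k := by
        rcases mul_pos_iff.1 hkpos with ⟨h1, _⟩ | ⟨h1, h2⟩
        · exact h1
        · exact absurd h2 (not_lt.2 (hnn k (b i k)))
      have hγj0 : 0 < γ i j0 := by
        rcases mul_pos_iff.1 hj0pos with ⟨h1, _⟩ | ⟨h1, h2⟩
        · exact h1
        · exact absurd h2 (not_lt.2 (hnn j0 (b i j0)))
      have hpair : ∃ p, 0 ≤ p ∧ D j0 p = D j0 (b i j0) ∧ D k p = D k (b i k) := by
        rcases le_total (b i j0) (b i k) with hle | hle
        · obtain ⟨p, hp1, hp2, hD1, hD2⟩ := key j0 k hj0A hkA (Ne.symm hkj0) hle hγj0 hγk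
          exact ⟨p, le_trans (hbnn i j0) hp1, hD1.symm, hD2.symm⟩
        · obtain ⟨p, hp1, hp2, hD1, hD2⟩ := key k j0 hkA hj0A hkj0 hle hγk hγj0
          exact ⟨p, le_trans (hbnn i k) hp1, hD2.symm, hD1.symm⟩
      obtain ⟨p, hp0, hpj0, hpk⟩ := hpair
      have h1 : q j0 ≤ p := hqmin j0 p hp0 hpj0
      have h2 : q k ≤ q j0 := hj0max k hkS
      -- squeeze
      have hle1 : D k (q k) ≤ D k (q j0) := hmono k h2
      have hle2 : D k (q j0) ≤ D k p := hmono k h1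
      rw [hqD k, hpk] at *
      linarith [hle1, hle2, (hqD k), hpk]
  · exact ⟨0, fun j hjA hjpos =>
      absurd (Finset.mem_filter.2 ⟨hjA, hjpos⟩) (fun h => hSne ⟨j, h⟩)⟩
end

section
/- Consider a single component with campaigns C_c, targeting groups C_t, continuous non-decreasing supply curves D_j, and common bid p*. Suppose an allocation γ* satisfies: (i) Σ_{j∈A_i∩C_t} γ*_{i,j}·D_j(p*) = I_i for every i ∈ C_c, and (ii) Σ_{i∈C_c} I_i = Σ_{j∈C_t} D_j(p*) (full utilization), and (iii) Σ_{j∈C_t} D_j(b) < Σ_{i∈C_c} I_i for all 0 ≤ b < p*. Then the pure strategy bidding p* with allocation γ* is optimal, with cost Σ_{i∈C_c} I_i·p* − ∫₀^{p*} Σ_{j∈C_t} D_j(u) du, and no feasible strategy achieves lower cost. -/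
/-!
Bidding `v` at a group with monotone supply curve `f` costs `f v * v - ∫₀ᵛ f`, and this is at
least `f v * p - ∫₀ᵖ f` for every price `p`, the difference being `∫ₚᵛ (f v - f u) du ≥ 0`.
Summing this bound over any feasible strategy at `p = p*` leaves
`(impressions bought) * p* - Σⱼ (weight at j) * ∫₀^{p*} Dⱼ`, which is at least
`(Σᵢ Iᵢ) * p* - Σⱼ ∫₀^{p*} Dⱼ` because the weights at each group are at most one.
The pure strategy `(p*, γ*)` attains this bound: full utilization forces, at every group with
`Dⱼ(p*) > 0`, total weight one, while a group with `Dⱼ(p*) = 0` has `Dⱼ = 0` on `[0, p*]`.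
-/

open MeasureTheory

section BipartiteSums

variable {ι κ : Type*} [Fintype ι] [Fintype κ] (A : ι → Finset κ) (B : κ → Finset ι)

theorem sum_comm_of_mem_iff {M : Type*} [AddCommMonoid M] (hAB : ∀ i j, i ∈ B j ↔ j ∈ A i)
    (f : ι → κ → M) :
    ∑ i, ∑ j ∈ A i, f i j = ∑ j, ∑ i ∈ B j, f i j :=
  Finset.sum_comm' fun i j => by simp [hAB]

theorem sum_sum_mul_sub_mul_eq {R : Type*} [Ring R] (hAB : ∀ i j, i ∈ B j ↔ j ∈ A i)
    (x y : ι → κ → R) (p : R) (b : κ → R) :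
    ∑ i, ∑ j ∈ A i, (x i j * p - y i j * b j) =
      (∑ i, ∑ j ∈ A i, x i j) * p - ∑ j, (∑ i ∈ B j, y i j) * b j := by
  simp only [Finset.sum_sub_distrib, Finset.sum_mul]
  rw [sum_comm_of_mem_iff A B hAB fun i j => y i j * b j]

end BipartiteSums

namespace Monotone

variable {f : ℝ → ℝ}

theorem intervalIntegral_le_mul_sub_s16 (hf : Monotone f) (p v : ℝ) :
    ∫ u in p..v, f u ≤ f v * (v - p) := by
  rcases le_total p v with hpv | hvp
  · calc ∫ u in p..v, f u ≤ ∫ _ in p..v, f v :=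
          intervalIntegral.integral_mono_on hpv hf.intervalIntegrable intervalIntegrable_const
            fun u hu => hf hu.2
      _ = f v * (v - p) := by simp [mul_comm]
  · have : f v * (p - v) ≤ ∫ u in v..p, f u :=
      calc f v * (p - v) = ∫ _ in v..p, f v := by simp [mul_comm]
        _ ≤ ∫ u in v..p, f u :=
          intervalIntegral.integral_mono_on hvp intervalIntegrable_const hf.intervalIntegrable
            fun u hu => hf hu.1
    rw [intervalIntegral.integral_symm]
    linarith

theorem mul_sub_intervalIntegral_le_s16 (hf : Monotone f) (p v : ℝ) :
    f v * p - ∫ u in (0 : ℝ)..p, f u ≤ f v * v - ∫ u in (0 : ℝ)..v, f u := by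
  have := intervalIntegral.integral_add_adjacent_intervals
    (hf.intervalIntegrable (μ := volume) (a := 0) (b := p))
    (hf.intervalIntegrable (μ := volume) (b := v))
  linarith [hf.intervalIntegral_le_mul_sub_s16 p v]

theorem intervalIntegral_eq_zero_of_apply_eq_zero (hf : Monotone f) (hf0 : ∀ u, 0 ≤ f u)
    {p : ℝ} (hp : 0 ≤ p) (hfp : f p = 0) : ∫ u in (0 : ℝ)..p, f u = 0 := by
  rw [intervalIntegral.integral_congr (g := fun _ => 0), intervalIntegral.integral_zero]
  intro u hu
  rw [Set.uIcc_of_le hp] at hu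
  exact le_antisymm (hfp ▸ hf hu.2) (hf0 u)

theorem mul_intervalIntegral_eq_of_mul_apply_eq (hf : Monotone f) (hf0 : ∀ u, 0 ≤ f u)
    {p s : ℝ} (hp : 0 ≤ p) (hs : s * f p = f p) :
    s * ∫ u in (0 : ℝ)..p, f u = ∫ u in (0 : ℝ)..p, f u := by
  by_cases hfp : f p = 0
  · rw [hf.intervalIntegral_eq_zero_of_apply_eq_zero hf0 hp hfp, mul_zero]
  · rw [(mul_eq_right₀ hfp).mp hs, one_mul]

end Monotone

section SingleComponent

variable {ι κ : Type*} [Fintype ι] [Fintype κ] {A : ι → Finset κ} {B : κ → Finset ι}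
  {D : κ → ℝ → ℝ} {I : ι → ℝ} {p : ℝ}

theorem pure_strategy_cost_eq (hAB : ∀ i j, i ∈ B j ↔ j ∈ A i) (hmono : ∀ j, Monotone (D j))
    (hnn : ∀ j b, 0 ≤ D j b) (hp : 0 ≤ p) {γ : ι → κ → ℝ} (hγcap : ∀ j, ∑ i ∈ B j, γ i j ≤ 1)
    (hexact : ∀ i, ∑ j ∈ A i, γ i j * D j p = I i) (hfull : ∑ i, I i = ∑ j, D j p) :
    ∑ i, ∑ j ∈ A i, γ i j * (D j p * p - ∫ u in (0 : ℝ)..p, D j u) =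
      (∑ i, I i) * p - ∑ j, ∫ u in (0 : ℝ)..p, D j u := by
  have hsupply : ∑ j, (∑ i ∈ B j, γ i j) * D j p = ∑ j, D j p := by
    simp only [Finset.sum_mul, ← sum_comm_of_mem_iff A B hAB, hexact, hfull]
  have hsaturated j : (∑ i ∈ B j, γ i j) * D j p = D j p :=
    (Finset.sum_eq_sum_iff_of_le fun j _ =>
      mul_le_of_le_one_left (hnn j p) (hγcap j)).mp hsupply j (Finset.mem_univ j)
  have hcost := sum_sum_mul_sub_mul_eq A B hAB (fun i j => γ i j * D j p) γ p
    fun j => ∫ u in (0 : ℝ)..p, D j u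
  simp only [hexact] at hcost
  simp only [mul_sub, ← mul_assoc, hcost,
    fun j => (hmono j).mul_intervalIntegral_eq_of_mul_apply_eq (hnn j) hp (hsaturated j)]

theorem le_cost_of_feasible (hAB : ∀ i j, i ∈ B j ↔ j ∈ A i) (hmono : ∀ j, Monotone (D j))
    (hnn : ∀ j b, 0 ≤ D j b) (hp : 0 ≤ p) {P : ι → κ → Finset ℝ} {w : ι → κ → ℝ → ℝ}
    (hw_nonneg : ∀ i j, ∀ v ∈ P i j, 0 ≤ w i j v) (hwcap : ∀ j, ∑ i ∈ B j, ∑ v ∈ P i j, w i j v ≤ 1)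
    (hdemand : ∀ i, I i ≤ ∑ j ∈ A i, ∑ v ∈ P i j, w i j v * D j v) :
    (∑ i, I i) * p - ∑ j, ∫ u in (0 : ℝ)..p, D j u ≤
      ∑ i, ∑ j ∈ A i, ∑ v ∈ P i j, w i j v * (D j v * v - ∫ u in (0 : ℝ)..v, D j u) := by
  have hbought : (∑ i, I i) * p ≤ (∑ i, ∑ j ∈ A i, ∑ v ∈ P i j, w i j v * D j v) * p :=
    mul_le_mul_of_nonneg_right (Finset.sum_le_sum fun i _ => hdemand i) hp
  have hcapacity : ∑ j, (∑ i ∈ B j, ∑ v ∈ P i j, w i j v) * ∫ u in (0 : ℝ)..p, D j u ≤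
      ∑ j, ∫ u in (0 : ℝ)..p, D j u :=
    Finset.sum_le_sum fun j _ => mul_le_of_le_one_left
      (intervalIntegral.integral_nonneg hp fun u _ => hnn j u) (hwcap j)
  calc (∑ i, I i) * p - ∑ j, ∫ u in (0 : ℝ)..p, D j u
      ≤ (∑ i, ∑ j ∈ A i, ∑ v ∈ P i j, w i j v * D j v) * p -
          ∑ j, (∑ i ∈ B j, ∑ v ∈ P i j, w i j v) * ∫ u in (0 : ℝ)..p, D j u := by linarith
    _ = ∑ i, ∑ j ∈ A i, ∑ v ∈ P i j, w i j v * (D j v * p - ∫ u in (0 : ℝ)..p, D j u) := by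
        rw [← sum_sum_mul_sub_mul_eq A B hAB]
        simp only [mul_sub, Finset.sum_sub_distrib, Finset.sum_mul, mul_assoc]
    _ ≤ ∑ i, ∑ j ∈ A i, ∑ v ∈ P i j, w i j v * (D j v * v - ∫ u in (0 : ℝ)..v, D j u) :=
        Finset.sum_le_sum fun i _ => Finset.sum_le_sum fun j _ => Finset.sum_le_sum fun v hv =>
          mul_le_mul_of_nonneg_left ((hmono j).mul_sub_intervalIntegral_le_s16 p v)
            (hw_nonneg i j v hv)

end SingleComponent

theorem stmt16_general (Nc Nr : ℕ)
    (I : Fin Nc → ℝ)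
    (D : Fin Nr → ℝ → ℝ)
    (hmono : ∀ j, Monotone (D j))
    (hnn : ∀ j b, 0 ≤ D j b)
    (A : Fin Nc → Finset (Fin Nr)) (B : Fin Nr → Finset (Fin Nc))
    (hAB : ∀ i j, i ∈ B j ↔ j ∈ A i)
    (pstar : ℝ) (hpstar : 0 ≤ pstar)
    (γ : Fin Nc → Fin Nr → ℝ)
    (hγcap : ∀ j, (∑ i ∈ B j, γ i j) ≤ 1)
    (hexact : ∀ i, (∑ j ∈ A i, γ i j * D j pstar) = I i)
    (hfull : (∑ i, I i) = ∑ j, D j pstar) :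
    (∑ i, ∑ j ∈ A i, γ i j * (D j pstar * pstar - ∫ u in (0:ℝ)..pstar, D j u)) =
        (∑ i, I i) * pstar - (∫ u in (0:ℝ)..pstar, (∑ j, D j u)) ∧
    (∀ (P : Fin Nc → Fin Nr → Finset ℝ) (w : Fin Nc → Fin Nr → ℝ → ℝ),
      (∀ i j, ∀ v ∈ P i j, 0 ≤ v) →
      (∀ i j, ∀ v ∈ P i j, 0 ≤ w i j v) →
      (∀ j, (∑ i ∈ B j, ∑ v ∈ P i j, w i j v) ≤ 1) →
      (∀ i, I i ≤ ∑ j ∈ A i, ∑ v ∈ P i j, w i j v * D j v) →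
      (∑ i, I i) * pstar - (∫ u in (0:ℝ)..pstar, (∑ j, D j u)) ≤
        ∑ i, ∑ j ∈ A i, ∑ v ∈ P i j,
          w i j v * (D j v * v - ∫ u in (0:ℝ)..v, D j u)) := by
  rw [intervalIntegral.integral_finsetSum fun j _ => (hmono j).intervalIntegrable]
  exact ⟨pure_strategy_cost_eq hAB hmono hnn hpstar hγcap hexact hfull,
    fun _ _ _ hw_nonneg hwcap hdemand =>
      le_cost_of_feasible hAB hmono hnn hpstar hw_nonneg hwcap hdemand⟩

/-- For a single component with common bid `p*`, if the allocation `γ*`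
exactly meets every campaign's demand at bid `p*`, the total demand exhausts the total
supply at `p*`, and the aggregate supply is strictly below total demand for all bids
below `p*`, then the pure strategy bidding `p*` with allocation `γ*` is optimal: its cost
is `Σᵢ Iᵢ·p* − ∫₀^{p*} Σⱼ Dⱼ`, and every feasible mixed strategy costs at least that. -/
theorem stmt16 (Nc Nr : ℕ)
    (I : Fin Nc → ℝ) (hI : ∀ i, 0 < I i)
    (D : Fin Nr → ℝ → ℝ)
    (hmono : ∀ j, Monotone (D j)) (hcont : ∀ j, Continuous (D j))
    (hnn : ∀ j b, 0 ≤ D j b)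
    (A : Fin Nc → Finset (Fin Nr)) (B : Fin Nr → Finset (Fin Nc))
    (hAB : ∀ i j, i ∈ B j ↔ j ∈ A i)
    (pstar : ℝ) (hpstar : 0 ≤ pstar)
    (γ : Fin Nc → Fin Nr → ℝ) (hγnn : ∀ i j, 0 ≤ γ i j)
    (hγcap : ∀ j, (∑ i ∈ B j, γ i j) ≤ 1)
    (hexact : ∀ i, (∑ j ∈ A i, γ i j * D j pstar) = I i)
    (hfull : (∑ i, I i) = ∑ j, D j pstar)
    (hcrit : ∀ b, 0 ≤ b → b < pstar → (∑ j, D j b) < ∑ i, I i) :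
    (∑ i, ∑ j ∈ A i, γ i j * (D j pstar * pstar - ∫ u in (0:ℝ)..pstar, D j u)) =
        (∑ i, I i) * pstar - (∫ u in (0:ℝ)..pstar, (∑ j, D j u)) ∧
    (∀ (P : Fin Nc → Fin Nr → Finset ℝ) (w : Fin Nc → Fin Nr → ℝ → ℝ),
      (∀ i j, ∀ v ∈ P i j, 0 ≤ v) →
      (∀ i j, ∀ v ∈ P i j, 0 ≤ w i j v) →
      (∀ j, (∑ i ∈ B j, ∑ v ∈ P i j, w i j v) ≤ 1) →
      (∀ i, I i ≤ ∑ j ∈ A i, ∑ v ∈ P i j, w i j v * D j v) →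
      (∑ i, I i) * pstar - (∫ u in (0:ℝ)..pstar, (∑ j, D j u)) ≤
        ∑ i, ∑ j ∈ A i, ∑ v ∈ P i j,
          w i j v * (D j v * v - ∫ u in (0:ℝ)..v, D j u)) :=
  stmt16_general Nc Nr I D hmono hnn A B hAB pstar hpstar γ hγcap hexact hfull
end
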